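/- Let d ≥ 1 be an integer and let 0 < α < 1/2. For each natural number s, let F(d,s) denote the number of monotone lattice paths from (0,0) to (s+2, s) using unit right and unit up steps such that no point of the path other than the final endpoint lies on the line y = x − 2 or on the line y = x + d. Then Σ'_{s=0}^{∞} F(d,s)·(α(1−α))^s = (1/α²)·(1 − (1−2α)/((1−α)²·(1 − (α/(1−α))^{d+2}))). -/

import Mathlib

/-- Number of right steps among the first `k` steps of a step sequence
(`true` = unit right step, `false` = unit up step). -/
def rightsBefore {n : ℕ} (f : Fin n → Bool) (k : ℕ) : ℕ :=
  (Finset.univ.filter fun j : Fin n => j.val < k ∧ f j = true).card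

/-- Number of up steps among the first `k` steps of a step sequence. -/
def upsBefore {n : ℕ} (f : Fin n → Bool) (k : ℕ) : ℕ :=
  (Finset.univ.filter fun j : Fin n => j.val < k ∧ f j = false).card

/-- `F d s`: the number of monotone lattice paths from `(0,0)` to `(s+2, s)`
using unit right and unit up steps such that no point of the path other than
the final endpoint lies on the line `y = x − 2` or on the line `y = x + d`. -/
noncomputable def latticeF (d s : ℕ) : ℕ :=
  Nat.card {f : Fin (2 * s + 2) → Bool //
    rightsBefore f (2 * s + 2) = s + 2 ∧
    ∀ k < 2 * s + 2,
      upsBefore f k ≠ rightsBefore f k + d ∧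
      rightsBefore f k ≠ upsBefore f k + 2}

/-!
Give a right step weight `α` and an up step weight `1 - α`. A path counted by `F(d, s)` has
weight `α ^ (s + 2) * (1 - α) ^ s`, so `α²` times the series is the probability `P 0` that the
walk `x - y`, started at `0`, reaches `2` before `-d`. Between the barriers this gambler's-ruin
probability satisfies `P p = α P (p + 1) + (1 - α) P (p - 1)`, so its successive differences form
a geometric progression of ratio `r = α / (1 - α)`; with `P 2 = 1` and `P (-d) = 0` this gives
`(1 - P 0) (1 - r ^ (d + 2)) = 1 - r ^ 2`.
-/

section Walk

variable {n : ℕ}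

@[simp]
lemma rightsBefore_zero (f : Fin n → Bool) : rightsBefore f 0 = 0 := by
  simp [rightsBefore]

@[simp]
lemma upsBefore_zero (f : Fin n → Bool) : upsBefore f 0 = 0 := by
  simp [upsBefore]

lemma rightsBefore_cons (b : Bool) (g : Fin n → Bool) (k : ℕ) :
    rightsBefore (Fin.cons b g : Fin (n + 1) → Bool) (k + 1) =
      (if b then 1 else 0) + rightsBefore g k := by
  simp only [rightsBefore, Finset.card_filter, Fin.sum_univ_succ, Fin.cons_zero, Fin.cons_succ,
    Fin.val_zero, Fin.val_succ, Nat.zero_lt_succ, Nat.succ_lt_succ_iff, true_and]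

lemma upsBefore_cons (b : Bool) (g : Fin n → Bool) (k : ℕ) :
    upsBefore (Fin.cons b g : Fin (n + 1) → Bool) (k + 1) =
      (if b then 0 else 1) + upsBefore g k := by
  simp only [upsBefore, Finset.card_filter, Fin.sum_univ_succ, Fin.cons_zero, Fin.cons_succ,
    Fin.val_zero, Fin.val_succ, Nat.zero_lt_succ, Nat.succ_lt_succ_iff, true_and]
  cases b <;> rfl

lemma rightsBefore_add_upsBefore (f : Fin n → Bool) :
    rightsBefore f n + upsBefore f n = n := by
  simp only [rightsBefore, upsBefore, Fin.is_lt, true_and, ← Bool.not_eq_true,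
    Finset.card_filter_add_card_filter_not, Finset.card_univ, Fintype.card_fin]

/-- `p + x - y` after `k` steps; from `p = 0`, the lines `y = x - 2` and `y = x + d` are the
levels `2` and `-d`. -/
def walkPos (p : ℤ) (f : Fin n → Bool) (k : ℕ) : ℤ :=
  p + rightsBefore f k - upsBefore f k

@[simp]
lemma walkPos_zero (p : ℤ) (f : Fin n → Bool) : walkPos p f 0 = p := by
  simp [walkPos]

lemma walkPos_cons (p : ℤ) (b : Bool) (g : Fin n → Bool) (k : ℕ) :
    walkPos p (Fin.cons b g : Fin (n + 1) → Bool) (k + 1) =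
      walkPos (p + if b then 1 else -1) g k := by
  rw [walkPos, walkPos, rightsBefore_cons, upsBefore_cons]
  cases b <;> simp <;> ring

def ExitsAtTwo (d : ℕ) (p : ℤ) (f : Fin n → Bool) : Prop :=
  walkPos p f n = 2 ∧ ∀ k < n, walkPos p f k ≠ 2 ∧ walkPos p f k ≠ -d

instance (d : ℕ) (p : ℤ) : DecidablePred (ExitsAtTwo (n := n) d p) := fun _ => by
  unfold ExitsAtTwo; infer_instance

lemma exitsAtTwo_cons_iff {d : ℕ} {p : ℤ} (b : Bool) (g : Fin n → Bool) :
    ExitsAtTwo d p (Fin.cons b g : Fin (n + 1) → Bool) ↔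
      (p ≠ 2 ∧ p ≠ -d) ∧ ExitsAtTwo d (p + if b then 1 else -1) g := by
  simp only [ExitsAtTwo, Nat.forall_lt_succ_left, walkPos_zero, walkPos_cons]
  tauto

end Walk

lemma sum_tuple_succ_bool {M : Type*} [AddCommMonoid M] {n : ℕ} (F : (Fin (n + 1) → Bool) → M) :
    ∑ f, F f = ∑ g, F (Fin.cons true g) + ∑ g, F (Fin.cons false g) := by
  rw [← (Fin.consEquiv fun _ => Bool).sum_comp, Fintype.sum_prod_type, Fintype.sum_bool]
  rfl

section ExitWeight

variable (d : ℕ) (α : ℝ)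

def stepWeight (b : Bool) : ℝ := if b then α else 1 - α

/-- Probability that the walk from `p`, stepping by `+1` with probability `α` and by `-1` otherwise,
first leaves `(-d, 2)` at time `n`, through `2`. -/
def exitWeight (n : ℕ) (p : ℤ) : ℝ :=
  ∑ f : Fin n → Bool with ExitsAtTwo d p f, ∏ i, stepWeight α (f i)

variable {d α}

lemma exitWeight_zero (p : ℤ) : exitWeight d α 0 p = if p = 2 then 1 else 0 := by
  by_cases hp : p = 2 <;> simp [exitWeight, ExitsAtTwo, hp, Finset.filter_true_of_mem,
    Finset.filter_false_of_mem]

lemma exitWeight_succ (n : ℕ) (p : ℤ) :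
    exitWeight d α (n + 1) p =
      if p ≠ 2 ∧ p ≠ -d then α * exitWeight d α n (p + 1) + (1 - α) * exitWeight d α n (p - 1)
      else 0 := by
  rw [exitWeight, Finset.sum_filter, sum_tuple_succ_bool]
  simp only [exitsAtTwo_cons_iff, Fin.prod_univ_succ, Fin.cons_zero, Fin.cons_succ,
    if_true, Bool.false_eq_true, if_false, ← sub_eq_add_neg]
  by_cases hp : p ≠ 2 ∧ p ≠ -d
  · simp [exitWeight, stepWeight, Finset.sum_filter, Finset.mul_sum, hp]
  · simp [hp]


lemma exitWeight_nonneg (h0 : 0 ≤ α) (h1 : α ≤ 1) (n : ℕ) (p : ℤ) : 0 ≤ exitWeight d α n p :=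
  Finset.sum_nonneg fun _ _ => Finset.prod_nonneg fun _ _ => by
    unfold stepWeight; split <;> linarith

lemma sum_range_exitWeight_le_one (h0 : 0 ≤ α) (h1 : α ≤ 1) (N : ℕ) (p : ℤ) :
    ∑ n ∈ Finset.range N, exitWeight d α n p ≤ 1 := by
  induction N generalizing p with
  | zero => simp
  | succ N ih =>
    rw [Finset.sum_range_succ', exitWeight_zero]
    by_cases hp : p ≠ 2 ∧ p ≠ -d
    · simp only [exitWeight_succ, if_pos hp, if_neg hp.1, add_zero, Finset.sum_add_distrib,
        ← Finset.mul_sum]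
      nlinarith [ih (p + 1), ih (p - 1)]
    · simp only [exitWeight_succ, if_neg hp, Finset.sum_const_zero, zero_add]
      split <;> norm_num

lemma summable_exitWeight (h0 : 0 ≤ α) (h1 : α ≤ 1) (p : ℤ) :
    Summable fun n => exitWeight d α n p :=
  summable_of_sum_range_le (fun n => exitWeight_nonneg h0 h1 n p)
    (fun N => sum_range_exitWeight_le_one h0 h1 N p)

variable (d α) in
noncomputable def exitProb (p : ℤ) : ℝ := ∑' n, exitWeight d α n p

lemma exitProb_eq (h0 : 0 ≤ α) (h1 : α ≤ 1) (p : ℤ) :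
    exitProb d α p = (if p = 2 then 1 else 0) +
      if p ≠ 2 ∧ p ≠ -d then α * exitProb d α (p + 1) + (1 - α) * exitProb d α (p - 1)
      else 0 := by
  rw [exitProb, (summable_exitWeight h0 h1 p).tsum_eq_zero_add, exitWeight_zero]
  congr 1
  by_cases hp : p ≠ 2 ∧ p ≠ -d
  · simp only [exitWeight_succ, if_pos hp]
    rw [(((summable_exitWeight h0 h1 _).mul_left α).tsum_add
      ((summable_exitWeight h0 h1 _).mul_left (1 - α))), tsum_mul_left, tsum_mul_left]
    rfl
  · simp only [exitWeight_succ, if_neg hp, tsum_zero]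

lemma exitProb_two (h0 : 0 ≤ α) (h1 : α ≤ 1) : exitProb d α 2 = 1 := by
  simp [exitProb_eq h0 h1 2]

lemma exitProb_neg (h0 : 0 ≤ α) (h1 : α ≤ 1) : exitProb d α (-d) = 0 := by
  rw [exitProb_eq h0 h1]
  simp [show -(d : ℤ) ≠ 2 by omega]

lemma exitProb_of_lt_of_lt (h0 : 0 ≤ α) (h1 : α ≤ 1) {p : ℤ} (hd : -d < p) (h2 : p < 2) :
    exitProb d α p = α * exitProb d α (p + 1) + (1 - α) * exitProb d α (p - 1) := by
  rw [exitProb_eq h0 h1]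
  simp [h2.ne, hd.ne']

end ExitWeight

lemma sub_eq_mul_geom_sum_of_sub_eq_mul {R : Type*} [CommRing R] {u : ℕ → R} {c : R} {m : ℕ}
    (h : ∀ j, j + 1 < m → u (j + 2) - u (j + 1) = c * (u (j + 1) - u j)) {k : ℕ} (hk : k ≤ m) :
    u k - u 0 = (u 1 - u 0) * ∑ i ∈ Finset.range k, c ^ i := by
  have hdiff : ∀ j < m, u (j + 1) - u j = c ^ j * (u 1 - u 0) := by
    intro j hj
    induction j with
    | zero => ring
    | succ j ih => rw [h j hj, ih (by omega)]; ring
  rw [← Finset.sum_range_sub, Finset.mul_sum]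
  exact Finset.sum_congr rfl fun j hj => by
    rw [hdiff j (by simp at hj; omega)]; ring

lemma one_sub_exitProb_zero_mul_geom_sum {d : ℕ} {α r : ℝ} (h0 : 0 ≤ α) (h1 : α < 1)
    (hr : (1 - α) * r = α) :
    (1 - exitProb d α 0) * ∑ i ∈ Finset.range (d + 2), r ^ i = 1 + r := by
  set u : ℕ → ℝ := fun j => exitProb d α (2 - j) with hu
  have hrec : ∀ j, j + 1 < d + 2 → u (j + 2) - u (j + 1) = r * (u (j + 1) - u j) := by
    intro j hj
    set p : ℤ := 2 - (j + 1 : ℕ)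
    have h := exitProb_of_lt_of_lt (d := d) h0 h1.le (p := p) (by omega) (by omega)
    have h' : (1 - α) * (u (j + 2) - u (j + 1) - r * (u (j + 1) - u j)) = 0 := by
      simp only [hu]
      rw [show (2 : ℤ) - (j + 2 : ℕ) = p - 1 by omega, show (2 : ℤ) - j = p + 1 by omega]
      linear_combination -h - (exitProb d α p - exitProb d α (p + 1)) * hr
    linear_combination (mul_eq_zero.mp h').resolve_left (by linarith)
  have hbarrier := sub_eq_mul_geom_sum_of_sub_eq_mul hrec le_rfl
  have hstart := sub_eq_mul_geom_sum_of_sub_eq_mul hrec (k := 2) (by omega)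
  simp only [hu, Nat.cast_zero, sub_zero, exitProb_two h0 h1.le] at hbarrier hstart
  rw [show (2 : ℤ) - (d + 2 : ℕ) = -d by push_cast; ring, exitProb_neg h0 h1.le] at hbarrier
  norm_num at hbarrier
  norm_num [Finset.sum_range_succ] at hstart
  linear_combination (1 + r) * hbarrier - (∑ i ∈ Finset.range (d + 2), r ^ i) * hstart

lemma prod_stepWeight (α : ℝ) {n : ℕ} (f : Fin n → Bool) :
    ∏ i, stepWeight α (f i) = α ^ rightsBefore f n * (1 - α) ^ upsBefore f n := by
  simp [stepWeight, Finset.prod_ite, rightsBefore, upsBefore]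

lemma exitsAtTwo_zero_iff {d s : ℕ} (f : Fin (2 * s + 2) → Bool) :
    ExitsAtTwo d 0 f ↔ rightsBefore f (2 * s + 2) = s + 2 ∧ ∀ k < 2 * s + 2,
      upsBefore f k ≠ rightsBefore f k + d ∧ rightsBefore f k ≠ upsBefore f k + 2 := by
  have := rightsBefore_add_upsBefore f
  unfold ExitsAtTwo walkPos
  constructor <;> rintro ⟨hend, hk⟩ <;> refine ⟨by omega, fun k hk' => ?_⟩ <;>
    have := hk k hk' <;> omega

lemma exitWeight_eq_latticeF (d s : ℕ) (α : ℝ) :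
    exitWeight d α (2 * s + 2) 0 = α ^ 2 * (latticeF d s * (α * (1 - α)) ^ s) := by
  have htot := rightsBefore_add_upsBefore (n := 2 * s + 2)
  have hweight : ∀ f ∈ ({f | ExitsAtTwo d 0 f} : Finset (Fin (2 * s + 2) → Bool)),
      ∏ i, stepWeight α (f i) = α ^ (s + 2) * (1 - α) ^ s := by
    intro f hf
    have hr := ((exitsAtTwo_zero_iff f).mp (Finset.mem_filter.mp hf).2).1
    rw [prod_stepWeight, hr, show upsBefore f (2 * s + 2) = s by have := htot f; omega]
  rw [exitWeight, Finset.sum_congr rfl hweight, Finset.sum_const, nsmul_eq_mul, latticeF,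
    Nat.card_eq_fintype_card, Fintype.card_subtype,
    Finset.filter_congr fun f _ => exitsAtTwo_zero_iff f, mul_pow]
  ring

lemma exitWeight_eq_zero_of_ne_two_mul_add_two {d n : ℕ} {α : ℝ} (hn : ∀ s, 2 * s + 2 ≠ n) :
    exitWeight d α n 0 = 0 := by
  refine Finset.sum_eq_zero fun f hf => absurd ?_ (hn (upsBefore f n))
  have := (Finset.mem_filter.mp hf).2.1
  have := rightsBefore_add_upsBefore f
  unfold walkPos at *
  omega

lemma exitProb_zero_eq_tsum_latticeF (d : ℕ) (α : ℝ) :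
    exitProb d α 0 = α ^ 2 * ∑' s : ℕ, (latticeF d s : ℝ) * (α * (1 - α)) ^ s := by
  have hinj : Function.Injective fun s : ℕ => 2 * s + 2 := fun a b h => by simp at h; omega
  have hsupp : Function.support (exitWeight d α · 0) ⊆ Set.range fun s : ℕ => 2 * s + 2 :=
    fun n hn => by
      by_contra h
      exact hn (exitWeight_eq_zero_of_ne_two_mul_add_two fun s hs => h ⟨s, hs⟩)
  rw [exitProb, ← hinj.tsum_eq hsupp, ← tsum_mul_left]
  exact tsum_congr fun s => exitWeight_eq_latticeF d s α

theorem stmt_18_general (d : ℕ) (α : ℝ) (hα0 : 0 < α) (hα1 : α < 1 / 2) :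
    ∑' s : ℕ, (latticeF d s : ℝ) * (α * (1 - α)) ^ s =
      (1 / α ^ 2) *
        (1 - (1 - 2 * α) /
          ((1 - α) ^ 2 * (1 - (α / (1 - α)) ^ (d + 2)))) := by
  set S := ∑' s : ℕ, (latticeF d s : ℝ) * (α * (1 - α)) ^ s
  set r := α / (1 - α)
  have h1α : 0 < 1 - α := by linarith
  have hr : (1 - α) * r = α := mul_div_cancel₀ α h1α.ne'
  have hpow : r ^ (d + 2) < 1 :=
    pow_lt_one₀ (div_nonneg hα0.le h1α.le) ((div_lt_one h1α).mpr (by linarith)) (by omega)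
  have hP := one_sub_exitProb_zero_mul_geom_sum (d := d) hα0.le (by linarith) hr
  rw [exitProb_zero_eq_tsum_latticeF] at hP
  have hruin : (1 - α ^ 2 * S) * (1 - r ^ (d + 2)) = 1 - r ^ 2 := by
    linear_combination (1 - r) * hP - (1 - α ^ 2 * S) * mul_neg_geom_sum r (d + 2)
  have h2α : 1 - 2 * α = (1 - α) ^ 2 * (1 - r ^ 2) := by
    linear_combination ((1 - α) * r + α) * hr
  rw [h2α, mul_div_mul_left _ _ (pow_ne_zero 2 h1α.ne'), ← hruin,
    mul_div_cancel_right₀ _ (sub_ne_zero.mpr hpow.ne')]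
  field_simp
  ring

/-- Lemma 5. -/
theorem stmt_18 (d : ℕ) (hd : 1 ≤ d) (α : ℝ) (hα0 : 0 < α) (hα1 : α < 1 / 2) :
    ∑' s : ℕ, (latticeF d s : ℝ) * (α * (1 - α)) ^ s =
      (1 / α ^ 2) *
        (1 - (1 - 2 * α) /
          ((1 - α) ^ 2 * (1 - (α / (1 - α)) ^ (d + 2)))) :=
  stmt_18_general d α hα0 hα1
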